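/- Let (R, m) be a Noetherian local ring and let I be a regular ideal of R (an ideal containing a non-zerodivisor) with h(I) < ∞. If J is a partial trace ideal of I, then J is isomorphic to I as an R-module. -/

import Mathlib

/-!
A partial trace ideal `J = f(I)` has finite colength `ℓ(R/J) = h(I) ≤ ℓ(R/I)`, so `R/J` is
Artinian and `𝔪ⁿ ⊆ J`; hence `J` contains a power of a non-zerodivisor of `I` (or else
`I = R`, and then `J = R`). A map `f : I → R` whose image contains a non-zerodivisor
`t = f w` is injective: for `z ∈ I`, `z t = f(z w) = w f(z)`. Hence `I ≅ f(I) = J`.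
-/

noncomputable def modLength (R M : Type*) [CommRing R] [AddCommGroup M] [Module R M] : ℕ∞ :=
  ⨆ s : RelSeries {(x, y) : Submodule R M × Submodule R M | x < y}, (s.length : ℕ∞)

noncomputable def hInv (R M : Type*) [CommRing R] [AddCommGroup M] [Module R M] : ℕ∞ :=
  ⨅ f : M →ₗ[R] R, modLength R (R ⧸ LinearMap.range f)

open IsLocalRing

theorem modLength_eq_length (R M : Type*) [CommRing R] [AddCommGroup M] [Module R M] :
    modLength R M = Module.length R M := by
  apply WithBot.coe_injective
  rw [Module.coe_length, Order.krullDim, modLength, WithBot.coe_iSup (OrderTop.bddAbove _)]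
  rfl

theorem hInv_le_length_quotient {R : Type*} [CommRing R] (I : Ideal R) :
    hInv R I ≤ Module.length R (R ⧸ I) := by
  rw [← modLength_eq_length]
  exact (iInf_le _ I.subtype).trans_eq (by rw [I.range_subtype])

section LocalRing

variable {R : Type*} [CommRing R] [IsLocalRing R]

theorem exists_pow_mem_of_length_quotient_ne_top {J : Ideal R}
    (hJ : Module.length R (R ⧸ J) ≠ ⊤) {x : R} (hx : x ∈ maximalIdeal R) : ∃ n, x ^ n ∈ J := by
  rw [Module.length_ne_top_iff, isFiniteLength_iff_isNoetherian_isArtinian] at hJ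
  have : IsArtinianRing (R ⧸ J) := isArtinian_of_tower R hJ.2
  obtain ⟨n, hn⟩ := exists_maximalIdeal_pow_le_of_isArtinianRing_quotient J
  exact ⟨n, hn (Ideal.pow_mem_pow hx n)⟩

theorem exists_mem_nonZeroDivisors_of_length_quotient_le {I J : Ideal R}
    (hI : ∃ x ∈ I, x ∈ nonZeroDivisors R) (hJ : Module.length R (R ⧸ J) ≠ ⊤)
    (hle : Module.length R (R ⧸ J) ≤ Module.length R (R ⧸ I)) :
    ∃ t ∈ J, t ∈ nonZeroDivisors R := by
  obtain ⟨x, hxI, hx⟩ := hI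
  by_cases hxm : x ∈ maximalIdeal R
  · obtain ⟨n, hn⟩ := exists_pow_mem_of_length_quotient_ne_top hJ hxm
    exact ⟨x ^ n, hn, pow_mem hx n⟩
  · have hI : I = ⊤ := Ideal.eq_top_of_isUnit_mem I hxI (notMem_maximalIdeal.mp hxm)
    have hJ0 : Module.length R (R ⧸ J) = 0 := by
      simpa [hI, Module.length_eq_zero] using hle
    have hJtop : J = ⊤ := by
      rwa [Module.length_eq_zero_iff, Submodule.Quotient.subsingleton_iff] at hJ0
    exact ⟨1, hJtop ▸ Submodule.mem_top, one_mem _⟩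

end LocalRing

theorem injective_of_mem_range_of_mem_nonZeroDivisors {R : Type*} [CommRing R] {I : Ideal R}
    (f : I →ₗ[R] R) {t : R} (ht : t ∈ LinearMap.range f) (hreg : t ∈ nonZeroDivisors R) :
    Function.Injective f := by
  obtain ⟨w, rfl⟩ := ht
  rw [← LinearMap.ker_eq_bot, eq_bot_iff]
  intro z hz
  have hcomm : (z : R) • w = (w : R) • z := Subtype.ext (mul_comm _ _)
  have hzt : (z : R) * f w = 0 := by
    rw [← smul_eq_mul, ← f.map_smul, hcomm, f.map_smul, LinearMap.mem_ker.mp hz, smul_zero]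
  simpa using Subtype.ext ((mul_right_mem_nonZeroDivisors_eq_zero_iff hreg).mp hzt)

theorem stmt4_general (R : Type*) [CommRing R] [IsLocalRing R]
    (I : Ideal R) (hreg : ∃ x ∈ I, x ∈ nonZeroDivisors R)
    (hfin : hInv R ↥I < ⊤)
    (J : Ideal R) (f : ↥I →ₗ[R] R) (hf : LinearMap.range f = J)
    (hJ : modLength R (R ⧸ J) = hInv R ↥I) :
    Nonempty (↥J ≃ₗ[R] ↥I) := by
  rw [modLength_eq_length] at hJ
  obtain ⟨t, htJ, ht⟩ := exists_mem_nonZeroDivisors_of_length_quotient_le hreg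
    (hJ ▸ hfin.ne) (hJ ▸ hInv_le_length_quotient I)
  have hinj := injective_of_mem_range_of_mem_nonZeroDivisors f (hf ▸ htJ) ht
  exact ⟨((LinearEquiv.ofInjective f hinj).trans (LinearEquiv.ofEq _ _ hf)).symm⟩

/-- Let `(R, m)` be a Noetherian local ring and `I` a regular ideal
(an ideal containing a non-zerodivisor) with `h(I) < ∞`.  If `J` is a partial trace ideal
of `I` (that is, `J = Im f` for some `f : I → R` with `ℓ_R(R/J) = h(I)`), then `J ≅ I`
as `R`-modules. -/
theorem stmt4 (R : Type*) [CommRing R] [IsNoetherianRing R] [IsLocalRing R]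
    (I : Ideal R) (hreg : ∃ x ∈ I, x ∈ nonZeroDivisors R)
    (hfin : hInv R ↥I < ⊤)
    (J : Ideal R) (f : ↥I →ₗ[R] R) (hf : LinearMap.range f = J)
    (hJ : modLength R (R ⧸ J) = hInv R ↥I) :
    Nonempty (↥J ≃ₗ[R] ↥I) :=
  stmt4_general R I hreg hfin J f hf hJ
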